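/- arXiv:1403.3268 — 5 statements merged into one kernel-verified Lean document; each statement's English description precedes it below -/
import Mathlib

section
/- Let g be a Lie algebra with a locally conformally symplectic structure: a non-degenerate 2-form ω (on g/h for a subalgebra h, or on g with h = 0) and a nonzero closed 1-form λ with dω = λ ∧ ω and dω ≠ 0. If λ does not vanish on the center z of g, then dim z ≤ 2. -/
/-!
STATEMENT 9. Let `g` be a Lie algebra carrying a locally conformally symplectic structure:
a non-degenerate 2-form `ω` and a nonzero closed 1-form `λ` with `dω = λ ∧ ω` and `dω ≠ 0`
(Chevalley–Eilenberg differentials, with the convention `dα(X,Y) = -α([X,Y])` for 1-forms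
and `dω(X,Y,W) = -ω([X,Y],W) + ω([X,W],Y) - ω([Y,W],X)` for 2-forms).
If `λ` does not vanish on the center `z` of `g`, then `dim z ≤ 2`.
-/
theorem stmt9 {L : Type*} [LieRing L] [LieAlgebra ℝ L] [Module.Finite ℝ L]
    (ω : L →ₗ[ℝ] L →ₗ[ℝ] ℝ) (lee : L →ₗ[ℝ] ℝ)
    (halt : ∀ X, ω X X = 0)
    (hnd : ∀ X, (∀ Y, ω X Y = 0) → X = 0)
    -- λ is closed: dλ = 0
    (hclosed : ∀ X Y : L, lee ⁅X, Y⁆ = 0)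
    -- dω = λ ∧ ω
    (hlcs : ∀ X Y W : L, -ω ⁅X, Y⁆ W + ω ⁅X, W⁆ Y - ω ⁅Y, W⁆ X
      = lee X * ω Y W - lee Y * ω X W + lee W * ω X Y)
    -- dω ≠ 0
    (hproper : ∃ X Y W : L, -ω ⁅X, Y⁆ W + ω ⁅X, W⁆ Y - ω ⁅Y, W⁆ X ≠ 0)
    -- λ does not vanish on the center
    (hcenter : ∃ Z ∈ LieAlgebra.center ℝ L, lee Z ≠ 0) :
    Module.finrank ℝ (LieAlgebra.center ℝ L) ≤ 2 := by
  obtain ⟨Z₀, hZ₀mem, hZ₀ne⟩ := hcenter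
  -- the linear map Z ↦ (λ Z, ω Z₀ Z) on the center is injective
  set f : (LieAlgebra.center ℝ L) →ₗ[ℝ] ℝ × ℝ :=
    (lee.comp (LieAlgebra.center ℝ L).toSubmodule.subtype).prod
      ((ω Z₀).comp (LieAlgebra.center ℝ L).toSubmodule.subtype) with hf
  have hinj : Function.Injective f := by
    rw [← LinearMap.ker_eq_bot, LinearMap.ker_eq_bot']
    rintro ⟨Z, hZmem⟩ hz
    have h1 : lee Z = 0 := congrArg Prod.fst hz
    have h2 : ω Z₀ Z = 0 := congrArg Prod.snd hz
    have hZcent : ∀ x : L, ⁅x, Z⁆ = 0 := fun x => hZmem x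
    have hZ₀cent : ∀ x : L, ⁅x, Z₀⁆ = 0 := fun x => hZ₀mem x
    have key : ∀ W : L, ω Z W = 0 := by
      intro W
      have := hlcs Z₀ Z W
      have b1 : ⁅Z₀, Z⁆ = 0 := hZcent Z₀
      have b2 : ⁅Z₀, W⁆ = (0 : L) := by
        have := hZ₀cent W
        rw [← lie_skew] at this
        simpa using congrArg Neg.neg this
      have b3 : ⁅Z, W⁆ = (0 : L) := by
        have := hZcent W
        rw [← lie_skew] at this
        simpa using congrArg Neg.neg this
      rw [b1, b2, b3, h1, h2] at this
      simp at this
      rcases this with h | h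
      · exact absurd h hZ₀ne
      · exact h
    have : Z = 0 := hnd Z key
    exact Subtype.ext this
  calc Module.finrank ℝ (LieAlgebra.center ℝ L)
      ≤ Module.finrank ℝ (ℝ × ℝ) := LinearMap.finrank_le_finrank_of_injective hinj
    _ = 2 := by simp
end

section
/- Let g = ℝD ⊕ g' be a Lie algebra where g' is an ideal, λ the closed 1-form with λ(D)=1, λ(g')=0, and suppose ω is a non-degenerate 2-form with dω = λ ∧ ω and dω ≠ 0. Then writing ω = -λ ∧ φ + ω' with φ, ω' pulled back from g', one necessarily has ω' = dφ; i.e. ω = -λ ∧ φ + dφ, so the twisted cohomology class [ω] ∈ H²_λ(g) vanishes. -/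
/-!
STATEMENT 11. Let `g = ℝD ⊕ g'` be a Lie algebra, where `g'` is an ideal (with `ℝD` a
complementary ideal, the locally splittable case, so that `D` is central), and let `λ` be
the closed 1-form with `λ(D) = 1`, `λ(g') = 0`. Suppose `ω` is a non-degenerate 2-form with
`dω = λ ∧ ω` and `dω ≠ 0`. Writing `ω = -λ ∧ φ + ω'` with `φ`, `ω'` pulled back from `g'`
(so `φ = -ι_D ω`, i.e. `φ(X) = -ω(D, X)`, and `ω'(X,Y) = ω(X - λ(X)D, Y - λ(Y)D)`), one
necessarily has `ω' = dφ`; i.e. `ω = -λ ∧ φ + dφ`, so the twisted cohomology class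
`[ω] ∈ H²_λ(g)` vanishes.

Chevalley–Eilenberg conventions: `dφ(X,Y) = -φ([X,Y])`,
`dω(X,Y,W) = -ω([X,Y],W) + ω([X,W],Y) - ω([Y,W],X)`.
-/
theorem stmt11 {L : Type*} [LieRing L] [LieAlgebra ℝ L]
    (I : LieIdeal ℝ L) (D : L) (lee : L →ₗ[ℝ] ℝ)
    (hleeD : lee D = 1) (hleeI : ∀ X ∈ I, lee X = 0)
    -- g = ℝD ⊕ g' :
    (hsplit : ∀ X : L, X - lee X • D ∈ I)
    -- ℝD is a complementary ideal, i.e. D is central :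
    (hD : ∀ X : L, ⁅D, X⁆ = 0)
    (ω : L →ₗ[ℝ] L →ₗ[ℝ] ℝ)
    (halt : ∀ X, ω X X = 0)
    (hnd : ∀ X, (∀ Y, ω X Y = 0) → X = 0)
    -- dω = λ ∧ ω
    (hlcs : ∀ X Y W : L, -ω ⁅X, Y⁆ W + ω ⁅X, W⁆ Y - ω ⁅Y, W⁆ X
      = lee X * ω Y W - lee Y * ω X W + lee W * ω X Y)
    -- dω ≠ 0
    (hproper : ∃ X Y W : L, -ω ⁅X, Y⁆ W + ω ⁅X, W⁆ Y - ω ⁅Y, W⁆ X ≠ 0) :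
    -- with φ := -ι_D ω :  ω' = dφ, i.e. ω'(X,Y) = -φ([X,Y]) = ω(D,[X,Y]) ...
    (∀ X Y : L, ω (X - lee X • D) (Y - lee Y • D) = ω D ⁅X, Y⁆) ∧
    -- ... hence ω = -λ ∧ φ + dφ, i.e. [ω] = 0 in H²_λ(g) :
    (∀ X Y : L, ω X Y = lee X * ω D Y - lee Y * ω D X + ω D ⁅X, Y⁆) := by
  have skew : ∀ X Y : L, ω X Y = - ω Y X := by
    intro X Y
    have h := halt (X + Y)
    simp [map_add, halt X, halt Y] at h
    linarith
  have key : ∀ X Y : L, ω X Y = lee X * ω D Y - lee Y * ω D X + ω D ⁅X, Y⁆ := by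
    intro X Y
    have h := hlcs X Y D
    have hXD : ⁅X, D⁆ = (0:L) := by rw [← lie_skew, hD, neg_zero]
    have hYD : ⁅Y, D⁆ = (0:L) := by rw [← lie_skew, hD, neg_zero]
    rw [hXD, hYD, hleeD] at h
    simp only [map_zero, LinearMap.zero_apply] at h
    have s1 := skew ⁅X,Y⁆ D
    have s2 := skew Y D
    have s3 := skew X D
    linear_combination -h - s1 - lee X * s2 + lee Y * s3
  refine ⟨?_, key⟩
  intro X Y
  have k := key X Y
  simp only [map_sub, map_smul, LinearMap.sub_apply, LinearMap.smul_apply,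
    smul_eq_mul, halt D]
  have s2 := skew Y D
  have s3 := skew X D
  linear_combination k - lee Y * s3
end

section
/- Let g = ℝD ⊕ g' be a Lie algebra where g' is an ideal and λ the closed 1-form with λ(D)=1, λ(g')=0. Then the first twisted cohomology H¹_λ(g) vanishes: every 1-form α with dα = λ ∧ α is a multiple of λ, hence α = -c·d_λ(1) for a constant c. -/
/-!
STATEMENT 12. Let `g = ℝD ⊕ g'` be a Lie algebra, where `g'` is an ideal (with `ℝD` a
complementary ideal, so `D` is central), and let `λ` be the closed 1-form with `λ(D) = 1`,
`λ(g') = 0`. Then the first twisted cohomology `H¹_λ(g)` vanishes: every 1-form `α` with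
`dα = λ ∧ α` is a (constant) multiple of `λ`, hence `α = c λ = -c · d_λ(1)`.

Chevalley–Eilenberg convention: `dα(X,Y) = -α([X,Y])`.
-/
theorem stmt12 {L : Type*} [LieRing L] [LieAlgebra ℝ L]
    (I : LieIdeal ℝ L) (D : L) (lee : L →ₗ[ℝ] ℝ)
    (hleeD : lee D = 1) (hleeI : ∀ X ∈ I, lee X = 0)
    (hsplit : ∀ X : L, X - lee X • D ∈ I)
    (hD : ∀ X : L, ⁅D, X⁆ = 0)
    (α : L →ₗ[ℝ] ℝ)
    -- α is d_λ-closed: dα = λ ∧ α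
    (hα : ∀ X Y : L, -α ⁅X, Y⁆ = lee X * α Y - lee Y * α X) :
    ∃ c : ℝ, ∀ X, α X = c * lee X := by
  refine ⟨α D, fun X => ?_⟩
  have hI : α (X - lee X • D) = 0 := by
    have h := hα D (X - lee X • D)
    rw [hD, hleeD, hleeI _ (hsplit X)] at h
    simpa using h.symm
  have : α X - lee X * α D = 0 := by simpa [mul_comm] using hI
  linarith [this]
end

section
/- Let g = u(2) = ℝe₀ ⊕ su(2) with su(2)-basis e₁,e₂,e₃ satisfying [e_α, e_β] = -e_γ for cyclic permutations (α,β,γ) of (1,2,3), and dual basis e⁰,e¹,e²,e³. For any nonzero φ = Σ a_α e^α, the 2-form ω = e⁰ ∧ φ + dφ is non-degenerate and satisfies dω = -e⁰ ∧ ω; i.e. ω is a locally conformally symplectic structure on u(2). Explicitly ω = Σ a_α e^{0α} + Σ a_α e^{βγ}. -/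
/-!
STATEMENT 13. Let `g = u(2) = ℝe₀ ⊕ su(2)` with `su(2)`-basis `e₁, e₂, e₃` satisfying
`[e_α, e_β] = -e_γ` for cyclic permutations `(α,β,γ)` of `(1,2,3)` (and `e₀` central), with
dual basis `e⁰, e¹, e², e³`. For any nonzero `φ = Σ a_α e^α`, the 2-form `ω = e⁰ ∧ φ + dφ`
is non-degenerate and satisfies `dω = -e⁰ ∧ ω`: it is a locally conformally symplectic
structure on `u(2)` with Lee form `λ = -e⁰`. Explicitly, `ω = Σ a_α e^{0α} + Σ a_α e^{βγ}`.

We realize `u(2)` on `Fin 4 → ℝ` (coordinates w.r.t. the basis `e₀,…,e₃`), with the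
Chevalley–Eilenberg conventions `dφ(u,v) = -φ([u,v])` and
`dω(u,v,w) = -ω([u,v],w) + ω([u,w],v) - ω([v,w],u)`.
-/

namespace Stmt13

/-- the Lie bracket of `u(2)`: `e₀` central, `[e_α, e_β] = -e_γ` cyclically. -/
def br (u v : Fin 4 → ℝ) : Fin 4 → ℝ :=
  ![0, -(u 2 * v 3 - u 3 * v 2), -(u 3 * v 1 - u 1 * v 3), -(u 1 * v 2 - u 2 * v 1)]

/-- the 1-form `φ = a₁ e¹ + a₂ e² + a₃ e³`. -/
def φ (a₁ a₂ a₃ : ℝ) (u : Fin 4 → ℝ) : ℝ := a₁ * u 1 + a₂ * u 2 + a₃ * u 3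

/-- `ω = e⁰ ∧ φ + dφ`, where `dφ(u,v) = -φ([u,v])`. -/
def ω (a₁ a₂ a₃ : ℝ) (u v : Fin 4 → ℝ) : ℝ :=
  u 0 * φ a₁ a₂ a₃ v - v 0 * φ a₁ a₂ a₃ u - φ a₁ a₂ a₃ (br u v)

/-- the Chevalley–Eilenberg differential `dω`. -/
def dω (a₁ a₂ a₃ : ℝ) (u v w : Fin 4 → ℝ) : ℝ :=
  -ω a₁ a₂ a₃ (br u v) w + ω a₁ a₂ a₃ (br u w) v - ω a₁ a₂ a₃ (br v w) u

end Stmt13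

open Stmt13 in
theorem stmt13 (a₁ a₂ a₃ : ℝ) (ha : ¬(a₁ = 0 ∧ a₂ = 0 ∧ a₃ = 0)) :
    -- explicit formula: ω = Σ a_α e^{0α} + Σ a_α e^{βγ}
    (∀ u v : Fin 4 → ℝ, ω a₁ a₂ a₃ u v =
      a₁ * (u 0 * v 1 - u 1 * v 0) + a₂ * (u 0 * v 2 - u 2 * v 0)
        + a₃ * (u 0 * v 3 - u 3 * v 0)
      + a₁ * (u 2 * v 3 - u 3 * v 2) + a₂ * (u 3 * v 1 - u 1 * v 3)
        + a₃ * (u 1 * v 2 - u 2 * v 1)) ∧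
    -- ω is non-degenerate
    (∀ u : Fin 4 → ℝ, (∀ v : Fin 4 → ℝ, ω a₁ a₂ a₃ u v = 0) → u = 0) ∧
    -- dω = -e⁰ ∧ ω : ω is lcs with Lee form λ = -e⁰
    (∀ u v w : Fin 4 → ℝ, dω a₁ a₂ a₃ u v w
      = -(u 0 * ω a₁ a₂ a₃ v w - v 0 * ω a₁ a₂ a₃ u w + w 0 * ω a₁ a₂ a₃ u v)) := by
  have hA : a₁ ^ 2 + a₂ ^ 2 + a₃ ^ 2 ≠ 0 := by
    intro h
    apply ha
    refine ⟨?_, ?_, ?_⟩ <;> nlinarith [sq_nonneg a₁, sq_nonneg a₂, sq_nonneg a₃]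
  refine ⟨?_, ?_, ?_⟩
  · intro u v
    simp only [ω, φ, br, Matrix.cons_val_one, Matrix.head_cons, Matrix.cons_val_zero,
      Matrix.cons_val_two, Matrix.tail_cons, Matrix.cons_val_three]
    ring
  · intro u h
    have h0 := h ![1, 0, 0, 0]
    have h1 := h ![0, 1, 0, 0]
    have h2 := h ![0, 0, 1, 0]
    have h3 := h ![0, 0, 0, 1]
    simp only [ω, φ, br, Matrix.cons_val_one, Matrix.head_cons, Matrix.cons_val_zero,
      Matrix.cons_val_two, Matrix.tail_cons, Matrix.cons_val_three] at h0 h1 h2 h3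
    have key : ∀ x : ℝ, (a₁ ^ 2 + a₂ ^ 2 + a₃ ^ 2) * x = 0 → x = 0 := by
      intro x hx
      rcases mul_eq_zero.1 hx with h | h
      · exact absurd h hA
      · exact h
    funext i
    fin_cases i
    · show u 0 = 0
      exact key _ (by linear_combination a₁ * h1 + a₂ * h2 + a₃ * h3)
    · show u 1 = 0
      exact key _ (by linear_combination (-a₁) * h0 + a₃ * h2 - a₂ * h3)
    · show u 2 = 0
      exact key _ (by linear_combination (-a₂) * h0 + a₁ * h3 - a₃ * h1)
    · show u 3 = 0
      exact key _ (by linear_combination (-a₃) * h0 + a₂ * h1 - a₁ * h2)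
  · intro u v w
    simp only [dω, ω, φ, br, Matrix.cons_val_one, Matrix.head_cons, Matrix.cons_val_zero,
      Matrix.cons_val_two, Matrix.tail_cons, Matrix.cons_val_three]
    ring
end

section
/- On u(2)^ℂ = ℂe₀ ⊕ sl(2,ℂ), every complex subalgebra l with u(2)^ℂ = l ⊕ ρ(l) (ρ the real structure fixing u(2)) has a basis of the form (e₀ + e', e'') with e', e'' ∈ sl(2,ℂ) satisfying [e', e''] = μ e'' for some μ ∈ ℂ*, and e'' is a nonzero nilpotent element of sl(2,ℂ). -/
/-!
The conjugate-transpose image `lᴴ` (which is `ρ(l)`) has the same dimension as `l`, so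
`gl(2,ℂ) = l ⊕ lᴴ` forces `dim l = 2`. The trace does not vanish on `l`, since otherwise it would
vanish on `l + lᴴ` as well; hence `l ∩ sl(2,ℂ)` is a line `ℂ e''` and `l` is spanned by `e''` and any
`f ∈ l` with `tr f = 2i`, which we write as `f = i·1 + e'`. The line `ℂ e''` is an ideal of `l`, so
`[e', e''] = [f, e''] = μ e''`. If `μ = 0`, then `e'` commutes with `e''` in `sl(2,ℂ)`, so `e' ∈ ℂ e''`
and `i·1 = f - e'` lies in `l`; but `i·1` is fixed by `ρ`, contradicting `l ∩ ρ(l) = 0`. Finally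
`μ tr(e''²) = tr([e', e''] e'') = 0`, and a traceless `2 × 2` matrix `Y` with `tr(Y²) = 0` has `Y² = 0`.
-/

attribute [local instance 100] LieRing.ofAssociativeRing

open Module Matrix

namespace Submodule

variable {K V : Type*} [Field K] [AddCommGroup V] [Module K V]

theorem finrank_map_semilinearEquiv {W : Type*} [AddCommGroup W] [Module K W] {σ σ' : K →+* K}
    [RingHomInvPair σ σ'] [RingHomInvPair σ' σ] (e : V ≃ₛₗ[σ] W) (p : Submodule K V) :
    finrank K (p.map (e : V →ₛₗ[σ] W)) = finrank K p := by
  have hσ : Function.Bijective σ := Function.bijective_iff_has_inverse.mpr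
    ⟨σ', fun _ => RingHomInvPair.comp_apply_eq, fun _ => RingHomInvPair.comp_apply_eq₂⟩
  have := lift_rank_eq_of_equiv_equiv σ (p.equivMapOfInjective _ e.injective).toAddEquiv hσ
    (map_smulₛₗ (p.equivMapOfInjective _ e.injective))
  simpa [finrank] using (congrArg Cardinal.toNat this).symm

theorem finrank_inf_ker_add_one [FiniteDimensional K V] (f : V →ₗ[K] K) {p : Submodule K V}
    {x : V} (hxp : x ∈ p) (hx : f x ≠ 0) :
    finrank K ↥(p ⊓ LinearMap.ker f) + 1 = finrank K p := by
  have hsup : p ⊔ LinearMap.ker f = ⊤ :=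
    top_unique <| (LinearMap.span_singleton_sup_ker_eq_top f hx).ge.trans <|
      sup_le_sup_right ((span_singleton_le_iff_mem x p).mpr hxp) _
  have hf : f ≠ 0 := fun h => hx (by simp [h])
  have hdim := finrank_sup_add_finrank_inf_eq p (LinearMap.ker f)
  have hker := Module.Dual.finrank_ker_add_one_of_ne_zero hf
  rw [hsup, finrank_top] at hdim
  omega

theorem exists_inf_ker_eq_span_singleton [FiniteDimensional K V] (f : V →ₗ[K] K)
    {p : Submodule K V} (hp : finrank K p = 2) {x : V} (hxp : x ∈ p) (hx : f x ≠ 0) :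
    ∃ e ≠ 0, p ⊓ LinearMap.ker f = K ∙ e := by
  have hrank : finrank K ↥(p ⊓ LinearMap.ker f) = 1 := by
    have := finrank_inf_ker_add_one f hxp hx
    omega
  obtain ⟨e, he, he0⟩ := exists_mem_ne_zero_of_ne_bot (p := p ⊓ LinearMap.ker f) fun h => by
    rw [h, finrank_bot] at hrank
    exact zero_ne_one hrank
  exact ⟨e, he0, eq_span_singleton_of_mem_of_finrank_eq_one hrank he he0⟩

theorem eq_span_pair_of_inf_ker_eq_span_singleton (f : V →ₗ[K] K) {p : Submodule K V}
    {x e : V} (hxp : x ∈ p) (hx : f x ≠ 0) (he : p ⊓ LinearMap.ker f = K ∙ e) :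
    p = span K {x, e} := by
  rw [span_insert, ← he, inf_comm p,
    ← sup_inf_assoc_of_le _ ((span_singleton_le_iff_mem x p).mpr hxp),
    LinearMap.span_singleton_sup_ker_eq_top f hx, top_inf_eq]

end Submodule

namespace Matrix

section ConjTranspose

variable {K : Type*} [Field K] [StarRing K] {n : Type*}

/-- This is `ρ(p) = {-Aᴴ | A ∈ p}`, since `p` is closed under negation. -/
def conjTransposeSubmodule (p : Submodule K (Matrix n n K)) : Submodule K (Matrix n n K) :=
  p.map (conjTransposeLinearEquiv n n K K : Matrix n n K →ₗ⋆[K] Matrix n n K)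

variable {p : Submodule K (Matrix n n K)}

theorem mem_conjTransposeSubmodule {A : Matrix n n K} :
    A ∈ conjTransposeSubmodule p ↔ Aᴴ ∈ p :=
  Submodule.mem_map_equiv p

theorem finrank_conjTransposeSubmodule : finrank K (conjTransposeSubmodule p) = finrank K p :=
  Submodule.finrank_map_semilinearEquiv _ p

theorem isCompl_conjTransposeSubmodule (hsum : ∀ A, ∃ x ∈ p, ∃ y ∈ p, A = x - yᴴ)
    (hint : ∀ x ∈ p, ∀ y ∈ p, x = -yᴴ → x = 0) : IsCompl p (conjTransposeSubmodule p) := by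
  refine ⟨Submodule.disjoint_def.mpr fun x hx hxρ => ?_, codisjoint_iff.mpr <| eq_top_iff.mpr ?_⟩
  · exact hint x hx _ (neg_mem (mem_conjTransposeSubmodule.mp hxρ)) (by simp)
  · intro A _
    obtain ⟨x, hx, y, hy, rfl⟩ := hsum A
    exact Submodule.mem_sup.mpr ⟨x, hx, -yᴴ,
      mem_conjTransposeSubmodule.mpr (by simpa using neg_mem hy), (sub_eq_add_neg _ _).symm⟩

theorem two_mul_finrank_of_isCompl_conjTransposeSubmodule [Fintype n]
    (h : IsCompl p (conjTransposeSubmodule p)) : 2 * finrank K p = Fintype.card n ^ 2 := by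
  have := Submodule.finrank_sup_add_finrank_inf_eq p (conjTransposeSubmodule p)
  rw [h.sup_eq_top, h.inf_eq_bot, finrank_top, finrank_bot, finrank_conjTransposeSubmodule,
    finrank_matrix, finrank_self] at this
  linarith

theorem one_notMem_of_disjoint_conjTransposeSubmodule [Fintype n] [DecidableEq n] [Nonempty n]
    (h : Disjoint p (conjTransposeSubmodule p)) : (1 : Matrix n n K) ∉ p := fun h1 =>
  one_ne_zero <| Submodule.disjoint_def.mp h 1 h1 <|
    mem_conjTransposeSubmodule.mpr (by simpa using h1)

theorem exists_trace_ne_zero_of_codisjoint_conjTransposeSubmodule [Fintype n] [DecidableEq n]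
    [Nonempty n] [CharZero K] (h : Codisjoint p (conjTransposeSubmodule p)) :
    ∃ A ∈ p, trace A ≠ 0 := by
  by_contra! hp
  have hle : p ⊔ conjTransposeSubmodule p ≤ LinearMap.ker (traceLinearMap n K K) :=
    sup_le (fun A hA => hp A hA) fun A hA => by
      simpa using congrArg star (hp _ (mem_conjTransposeSubmodule.mp hA))
  have := hle (h.eq_top ▸ Submodule.mem_top (x := (1 : Matrix n n K)))
  simp [Fintype.card_ne_zero] at this

end ConjTranspose

theorem trace_pow_succ_eq_zero_of_lie_eq_smul {n R : Type*} [Fintype n] [DecidableEq n]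
    [CommRing R] [NoZeroDivisors R] {X Y : Matrix n n R} {μ : R} (hμ : μ ≠ 0)
    (h : ⁅X, Y⁆ = μ • Y) (k : ℕ) : trace (Y ^ (k + 1)) = 0 := by
  have : μ * trace (Y ^ (k + 1)) = 0 := by
    rw [← smul_eq_mul, ← trace_smul, pow_succ', ← smul_mul_assoc, ← h, Ring.lie_def, sub_mul,
      trace_sub, mul_assoc, ← pow_succ', trace_mul_cycle Y X, ← pow_succ, trace_mul_comm X,
      sub_self]
  exact (mul_eq_zero.mp this).resolve_left hμ

section FinTwo

variable {K : Type*} [Field K]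

/-- In these coordinates on `sl(2)` the commutator is, up to factors of `2`, the cross product. -/
def tracelessCoords (M : Matrix (Fin 2) (Fin 2) K) : Fin 3 → K := ![M 0 0, M 0 1, M 1 0]

theorem eq_of_tracelessCoords_eq {A B : Matrix (Fin 2) (Fin 2) K} (htr : trace A = trace B)
    (h : tracelessCoords A = tracelessCoords B) : A = B := by
  have hc := congrFun h
  have h00 : A 0 0 = B 0 0 := hc 0
  rw [trace_fin_two, trace_fin_two] at htr
  ext i j
  fin_cases i <;> fin_cases j
  · exact h00
  · exact hc 1
  · exact hc 2
  · change A 1 1 = B 1 1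
    linear_combination htr - h00

theorem crossProduct_tracelessCoords_eq_zero_of_commute [CharZero K]
    {X Y : Matrix (Fin 2) (Fin 2) K} (hX : trace X = 0) (hY : trace Y = 0) (hXY : Commute X Y) :
    crossProduct (tracelessCoords X) (tracelessCoords Y) = 0 := by
  rw [trace_fin_two, add_eq_zero_iff_eq_neg'] at hX hY
  have h := congrFun₂ hXY.eq
  have h00 := h 0 0
  have h01 := h 0 1
  have h10 := h 1 0
  simp only [mul_apply, Fin.sum_univ_two, hX, hY] at h00 h01 h10
  ext i
  fin_cases i <;> simp [tracelessCoords, cross_apply]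
  · linear_combination h00
  · linear_combination h10 / 2
  · linear_combination h01 / 2

theorem exists_eq_smul_of_commute_of_trace_eq_zero [CharZero K]
    {X Y : Matrix (Fin 2) (Fin 2) K} (hX : trace X = 0) (hY : trace Y = 0) (hY0 : Y ≠ 0)
    (hXY : Commute X Y) : ∃ t : K, X = t • Y := by
  have hv : tracelessCoords Y ≠ 0 := fun h =>
    hY0 <| eq_of_tracelessCoords_eq (by simp [hY]) <| by
      rw [h]
      ext i
      fin_cases i <;> simp [tracelessCoords]
  obtain ⟨t, ht⟩ : ∃ t : K, t • tracelessCoords Y = tracelessCoords X := by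
    by_contra! h
    exact crossProduct_ne_zero_iff_linearIndependent.mpr ((LinearIndependent.pair_iff' hv).mpr h)
      (crossProduct_tracelessCoords_eq_zero_of_commute hY hX hXY.symm)
  refine ⟨t, eq_of_tracelessCoords_eq (by simp [hX, hY]) ?_⟩
  rw [← ht]
  ext i
  fin_cases i <;> simp [tracelessCoords]

theorem sq_eq_zero_of_trace_eq_zero [CharZero K] {Y : Matrix (Fin 2) (Fin 2) K}
    (h : trace Y = 0) (h2 : trace (Y ^ 2) = 0) : Y ^ 2 = 0 := by
  rw [trace_fin_two, add_eq_zero_iff_eq_neg'] at h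
  rw [sq, trace_fin_two] at h2
  simp only [mul_apply, Fin.sum_univ_two, h] at h2
  have hdet : Y 0 0 * Y 0 0 + Y 0 1 * Y 1 0 = 0 := by linear_combination h2 / 2
  ext i j
  fin_cases i <;> fin_cases j <;> simp [sq, mul_apply, h]
  · linear_combination hdet
  · ring
  · ring
  · linear_combination hdet

end FinTwo

end Matrix

open Matrix in
theorem stmt14 (l : LieSubalgebra ℂ (Matrix (Fin 2) (Fin 2) ℂ))
    -- gl(2,ℂ) = l + ρ(l), where ρ(A) = -Aᴴ :
    (hsum : ∀ A : Matrix (Fin 2) (Fin 2) ℂ, ∃ x ∈ l, ∃ y ∈ l, A = x - yᴴ)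
    -- l ∩ ρ(l) = 0 :
    (hint : ∀ x ∈ l, ∀ y ∈ l, x = -yᴴ → x = 0) :
    ∃ e' e'' : Matrix (Fin 2) (Fin 2) ℂ,
      Matrix.trace e' = 0 ∧ Matrix.trace e'' = 0 ∧
      -- (e₀ + e', e'') is a basis of l, where e₀ = i·1 :
      l.toSubmodule
        = Submodule.span ℂ {Complex.I • (1 : Matrix (Fin 2) (Fin 2) ℂ) + e', e''} ∧
      (∃ μ : ℂ, μ ≠ 0 ∧ ⁅e', e''⁆ = μ • e'') ∧
      e'' ≠ 0 ∧ IsNilpotent e'' := by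
  have hl := isCompl_conjTransposeSubmodule hsum hint
  have hdim : finrank ℂ l.toSubmodule = 2 := by
    have := two_mul_finrank_of_isCompl_conjTransposeSubmodule hl
    simp only [Fintype.card_fin] at this
    omega
  obtain ⟨f, hfl, hf⟩ : ∃ f ∈ l, trace f = 2 * Complex.I := by
    obtain ⟨A, hA, hA0⟩ := exists_trace_ne_zero_of_codisjoint_conjTransposeSubmodule hl.codisjoint
    exact ⟨(2 * Complex.I / trace A) • A, l.smul_mem _ hA, by simp [hA0]⟩
  obtain ⟨e'', he''0, hsl⟩ := l.toSubmodule.exists_inf_ker_eq_span_singleton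
    (traceLinearMap (Fin 2) ℂ ℂ) hdim hfl (by simp [hf])
  have mem_sl (A) : A ∈ l ∧ trace A = 0 ↔ ∃ c : ℂ, c • e'' = A := by
    simpa [Submodule.mem_span_singleton] using SetLike.ext_iff.mp hsl A
  obtain ⟨he''l, he''⟩ := (mem_sl e'').mpr ⟨1, one_smul _ _⟩
  obtain ⟨μ, hμ⟩ := (mem_sl ⁅f, e''⁆).mp
    ⟨l.lie_mem hfl he''l, by rw [Ring.lie_def, trace_sub, trace_mul_comm, sub_self]⟩
  have he' : trace (f - Complex.I • 1) = 0 := by simp [hf, mul_comm]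
  have hlie : ⁅f - Complex.I • 1, e''⁆ = μ • e'' := by simp [hμ, Ring.lie_def, sub_mul, mul_sub]
  have hμ0 : μ ≠ 0 := by
    rintro rfl
    obtain ⟨t, ht⟩ := exists_eq_smul_of_commute_of_trace_eq_zero he' he'' he''0
      (commute_iff_lie_eq.mpr (by rw [hlie, zero_smul]))
    refine one_notMem_of_disjoint_conjTransposeSubmodule hl.disjoint
      ((l.toSubmodule.smul_mem_iff Complex.I_ne_zero).mp ?_)
    rw [show Complex.I • (1 : Matrix (Fin 2) (Fin 2) ℂ) = f - t • e'' by rw [← ht]; abel]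
    exact l.sub_mem hfl (l.smul_mem t he''l)
  refine ⟨f - Complex.I • 1, e'', he', he'', ?_, ⟨μ, hμ0, hlie⟩, he''0,
    ⟨2, sq_eq_zero_of_trace_eq_zero he'' (trace_pow_succ_eq_zero_of_lie_eq_smul hμ0 hlie 1)⟩⟩
  rw [add_sub_cancel]
  exact Submodule.eq_span_pair_of_inf_ker_eq_span_singleton _ hfl (by simp [hf]) hsl
end
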